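/- For every real x ≥ 0, Q(x) = (1/π) ∫₀^{π/2} exp(-x²/(2 sin²θ)) dθ, where Q(x) = ∫ₓ^∞ (1/√(2π)) e^{-t²/2} dt is the Gaussian tail function (Craig's formula). -/

import Mathlib

open Real MeasureTheory Set Filter Topology

/-!
Substituting `θ = π/2 - arctan u` turns the right-hand side into
`(1/π) ∫₀^∞ e^{-(1+u²)x²/2} / (1+u²) du`, and the integrand is `∫ₓ^∞ t e^{-(1+u²)t²/2} dt`.
Exchanging the two integrals, the inner integral over `u` is a half-line Gaussian integral,
equal to `√(2π)/2 · e^{-t²/2}` for `t > 0`, and what remains is the Gaussian tail.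
-/

theorem image_arctan_Ioi_zero : arctan '' Ioi 0 = Ioo 0 (π / 2) := by
  ext θ
  constructor
  · rintro ⟨u, hu, rfl⟩
    exact ⟨arctan_zero ▸ arctan_strictMono hu, arctan_lt_pi_div_two u⟩
  · rintro ⟨h0, hπ⟩
    exact ⟨tan θ, tan_pos_of_pos_of_lt_pi_div_two h0 hπ,
      arctan_tan (by linarith [pi_pos]) hπ⟩

theorem integral_Ioo_zero_pi_div_two_eq_integral_comp_arctan (g : ℝ → ℝ) :
    ∫ θ in Ioo 0 (π / 2), g θ = ∫ u in Ioi 0, g (arctan u) / (1 + u ^ 2) := by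
  rw [← image_arctan_Ioi_zero, integral_image_eq_integral_abs_deriv_smul measurableSet_Ioi
    (fun u _ => (hasDerivAt_arctan u).hasDerivWithinAt) arctan_injective.injOn]
  refine setIntegral_congr_fun measurableSet_Ioi fun u _ => ?_
  rw [abs_of_pos (by positivity), smul_eq_mul, one_div_mul_eq_div]

theorem integral_Ioi_mul_exp_neg_mul_sq {a : ℝ} (ha : 0 < a) (x : ℝ) :
    ∫ t in Ioi x, t * exp (-a * t ^ 2) = exp (-a * x ^ 2) / (2 * a) := by
  have hderiv (t : ℝ) : HasDerivAt (fun t => -(exp (-a * t ^ 2) / (2 * a)))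
      (t * exp (-a * t ^ 2)) t :=
    (((hasDerivAt_pow 2 t).const_mul (-a)).exp.div_const (2 * a)).fun_neg.congr_deriv
      (by field_simp; ring)
  have hlim : Tendsto (fun t => -(exp (-a * t ^ 2) / (2 * a))) atTop (𝓝 0) := by
    simpa using (tendsto_exp_atBot.comp ((tendsto_pow_atTop two_ne_zero).const_mul_atTop_of_neg
      (neg_neg_of_pos ha))).div_const (2 * a) |>.neg
  rw [integral_Ioi_of_hasDerivAt_of_tendsto' (fun t _ => hderiv t)
    (integrable_mul_exp_neg_mul_sq ha).integrableOn hlim]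
  ring

theorem integral_exp_div_sin_sq_eq_integral_Ioi (x : ℝ) :
    ∫ θ in (0 : ℝ)..(π / 2), exp (-x ^ 2 / (2 * sin θ ^ 2)) =
      ∫ u in Ioi 0, exp (-((1 + u ^ 2) / 2) * x ^ 2) / (1 + u ^ 2) := by
  have hreflect : ∫ θ in (0 : ℝ)..(π / 2), exp (-x ^ 2 / (2 * sin θ ^ 2)) =
      ∫ θ in (0 : ℝ)..(π / 2), exp (-x ^ 2 / (2 * cos θ ^ 2)) := by
    simpa [sin_pi_div_two_sub] using (intervalIntegral.integral_comp_sub_left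
      (fun θ => exp (-x ^ 2 / (2 * sin θ ^ 2))) (a := 0) (b := π / 2) (π / 2)).symm
  rw [hreflect, intervalIntegral.integral_of_le (by positivity), integral_Ioc_eq_integral_Ioo,
    integral_Ioo_zero_pi_div_two_eq_integral_comp_arctan]
  refine setIntegral_congr_fun measurableSet_Ioi fun u _ => ?_
  rw [cos_sq_arctan]
  congr 2
  field_simp

theorem integrable_exp_neg_sq_div_two : Integrable fun t : ℝ => exp (-t ^ 2 / 2) := by
  simpa [neg_div, div_eq_inv_mul] using integrable_exp_neg_mul_sq (b := 1 / 2) (by norm_num)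

theorem mul_exp_neg_one_add_sq_mul_sq (t u : ℝ) :
    t * exp (-((1 + u ^ 2) / 2) * t ^ 2) = t * exp (-t ^ 2 / 2) * exp (-(t ^ 2 / 2) * u ^ 2) := by
  rw [mul_assoc, ← exp_add]
  ring_nf

theorem integrableOn_Ioi_mul_exp_neg_one_add_sq_mul_sq {t : ℝ} (ht : t ≠ 0) :
    IntegrableOn (fun u => t * exp (-((1 + u ^ 2) / 2) * t ^ 2)) (Ioi 0) := by
  simp_rw [mul_exp_neg_one_add_sq_mul_sq t]
  exact (integrable_exp_neg_mul_sq (by positivity)).integrableOn.const_mul _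

theorem integral_Ioi_mul_exp_neg_one_add_sq_mul_sq {t : ℝ} (ht : 0 < t) :
    ∫ u in Ioi 0, t * exp (-((1 + u ^ 2) / 2) * t ^ 2) = √(2 * π) / 2 * exp (-t ^ 2 / 2) := by
  simp_rw [mul_exp_neg_one_add_sq_mul_sq t]
  rw [integral_const_mul, integral_gaussian_Ioi, div_div_eq_mul_div, sqrt_div' _ (sq_nonneg t),
    sqrt_sq ht.le, mul_comm π]
  field_simp

theorem integrable_mul_exp_neg_one_add_sq_mul_sq {x : ℝ} (hx : 0 ≤ x) :
    Integrable (Function.uncurry fun t u => t * exp (-((1 + u ^ 2) / 2) * t ^ 2))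
      ((volume.restrict (Ioi x)).prod (volume.restrict (Ioi 0))) := by
  refine (integrable_prod_iff (Continuous.aestronglyMeasurable (by fun_prop))).2 ⟨?_, ?_⟩
  · filter_upwards [ae_restrict_mem measurableSet_Ioi] with t ht
    exact integrableOn_Ioi_mul_exp_neg_one_add_sq_mul_sq (hx.trans_lt ht).ne'
  · refine (integrable_exp_neg_sq_div_two.const_mul (√(2 * π) / 2)).integrableOn.congr_fun
      (fun t ht => ?_) measurableSet_Ioi
    have ht : 0 < t := hx.trans_lt ht
    simp only [Function.uncurry_apply_pair]
    rw [← integral_Ioi_mul_exp_neg_one_add_sq_mul_sq ht]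
    exact integral_congr_ae (ae_of_all _ fun u => (norm_of_nonneg (by positivity)).symm)

/-- Craig's formula for the Gaussian tail function. -/
theorem craig_formula (x : ℝ) (hx : 0 ≤ x) :
    ∫ t in Set.Ioi x, (1 / Real.sqrt (2 * π)) * Real.exp (-t ^ 2 / 2) =
      (1 / π) * ∫ θ in (0 : ℝ)..(π / 2), Real.exp (-x ^ 2 / (2 * Real.sin θ ^ 2)) := by
  have hdensity (t : ℝ) (ht : t ∈ Ioi x) : 1 / √(2 * π) * exp (-t ^ 2 / 2) =
      1 / π * ∫ u in Ioi 0, t * exp (-((1 + u ^ 2) / 2) * t ^ 2) := by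
    rw [integral_Ioi_mul_exp_neg_one_add_sq_mul_sq (hx.trans_lt ht)]
    have : √(2 * π) ^ 2 = 2 * π := sq_sqrt (by positivity)
    field_simp
    linear_combination -this
  calc ∫ t in Ioi x, 1 / √(2 * π) * exp (-t ^ 2 / 2)
      = 1 / π * ∫ t in Ioi x, ∫ u in Ioi 0, t * exp (-((1 + u ^ 2) / 2) * t ^ 2) := by
        rw [setIntegral_congr_fun measurableSet_Ioi hdensity, integral_const_mul]
    _ = 1 / π * ∫ u in Ioi 0, ∫ t in Ioi x, t * exp (-((1 + u ^ 2) / 2) * t ^ 2) := by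
        rw [integral_integral_swap (integrable_mul_exp_neg_one_add_sq_mul_sq hx)]
    _ = 1 / π * ∫ u in Ioi 0, exp (-((1 + u ^ 2) / 2) * x ^ 2) / (1 + u ^ 2) := by
        congr 1
        refine setIntegral_congr_fun measurableSet_Ioi fun u _ => ?_
        rw [integral_Ioi_mul_exp_neg_mul_sq (by positivity)]
        ring
    _ = 1 / π * ∫ θ in (0 : ℝ)..(π / 2), exp (-x ^ 2 / (2 * sin θ ^ 2)) := by
        rw [integral_exp_div_sin_sq_eq_integral_Ioi]
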